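/- arXiv:math-ph/0201035 — 4 statements merged into one kernel-verified Lean document; each statement's English description precedes it below -/
import Mathlib

section
/- The Bott cocycle satisfies the 2-cocycle identity: for smooth orientation-preserving diffeomorphisms f, g, h of ℝ with f(x+2π)=f(x)+2π (similarly for g, h) and positive derivatives, B(f∘g, h) + B(f, g) = B(f, g∘h) + B(g, h), where B(f,g) = ∫₀^{2π} log((f∘g)') d(log g'). -/
open Real intervalIntegral
open scoped ContDiff

/-- The Bott cocycle `B(f,g) = ∫₀^{2π} log(f'(g x) · g'(x)) · (g''(x)/g'(x)) dx`. -/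
noncomputable def bottCocycle (f g : ℝ → ℝ) : ℝ :=
  ∫ x in (0:ℝ)..(2 * Real.pi),
    Real.log (deriv f (g x) * deriv g x) * (deriv (deriv g) x / deriv g x)

section aux

variable {f g h : ℝ → ℝ}

private lemma derivCD (hf : ContDiff ℝ ∞ f) : ContDiff ℝ ∞ (deriv f) :=
  (contDiff_infty_iff_deriv.mp hf).2

private lemma Lsmooth (hf : ContDiff ℝ ∞ f) (hf' : ∀ x, 0 < deriv f x) :
    ContDiff ℝ ∞ fun x => Real.log (deriv f x) :=
  (derivCD hf).log fun x => (hf' x).ne'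

private lemma diffOf (hf : ContDiff ℝ ∞ f) : Differentiable ℝ f :=
  (contDiff_infty_iff_deriv.mp hf).1

private lemma hasDerivL (hf : ContDiff ℝ ∞ f) (hf' : ∀ x, 0 < deriv f x) (x : ℝ) :
    HasDerivAt (fun y => Real.log (deriv f y)) (deriv (deriv f) x / deriv f x) x :=
  ((diffOf (derivCD hf) x).hasDerivAt).log (hf' x).ne'

private lemma deriv_comp_eq (hf : ContDiff ℝ ∞ f) (hg : ContDiff ℝ ∞ g) (x : ℝ) :
    deriv (f ∘ g) x = deriv f (g x) * deriv g x :=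
  deriv_comp x (diffOf hf _) (diffOf hg _)

private lemma bott_eq (hf : ContDiff ℝ ∞ f) (hg : ContDiff ℝ ∞ g)
    (hf' : ∀ x, 0 < deriv f x) (hg' : ∀ x, 0 < deriv g x) :
    bottCocycle f g = ∫ x in (0:ℝ)..(2 * Real.pi),
      (Real.log (deriv f (g x)) + Real.log (deriv g x)) *
        (deriv (deriv g) x / deriv g x) := by
  unfold bottCocycle
  exact intervalIntegral.integral_congr fun x _ => by
    rw [Real.log_mul (hf' (g x)).ne' (hg' x).ne']

private lemma periodic_deriv' {c : ℝ} (hu : Function.Periodic f c) :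
    Function.Periodic (deriv f) c := fun x => by
  have h2 := deriv_comp_add_const (f := f) (a := c) (x := x)
  rw [funext hu] at h2
  exact h2.symm

private lemma periodic_deriv_shift {c : ℝ} (hu : ∀ x, f (x + c) = f x + c) :
    Function.Periodic (deriv f) c := fun x => by
  have h2 := deriv_comp_add_const (f := f) (a := c) (x := x)
  rw [funext hu, deriv_add_const] at h2
  exact h2.symm

private lemma Dcomp (hg : ContDiff ℝ ∞ g) (hh : ContDiff ℝ ∞ h)
    (hg' : ∀ x, 0 < deriv g x) (hh' : ∀ x, 0 < deriv h x) (x : ℝ) :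
    deriv (deriv (g ∘ h)) x / deriv (g ∘ h) x
      = deriv (deriv g) (h x) / deriv g (h x) * deriv h x
        + deriv (deriv h) x / deriv h x := by
  have hgh : ContDiff ℝ ∞ (g ∘ h) := hg.comp hh
  have hgh' : ∀ y, 0 < deriv (g ∘ h) y := fun y => by
    rw [deriv_comp_eq hg hh]; exact mul_pos (hg' _) (hh' _)
  have h1 := (hasDerivL hgh hgh' x).deriv
  have heq : (fun y => Real.log (deriv (g ∘ h) y))
      = fun y => Real.log (deriv g (h y)) + Real.log (deriv h y) := funext fun y => by
    rw [deriv_comp_eq hg hh, Real.log_mul (hg' _).ne' (hh' _).ne']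
  have h3 : deriv (fun y => Real.log (deriv (g ∘ h) y)) x
      = deriv (fun y => Real.log (deriv g (h y)) + Real.log (deriv h y)) x := by rw [heq]
  have h2 := (((hasDerivL hg hg' (h x)).comp x
      ((diffOf hh x).hasDerivAt)).add (hasDerivL hh hh' x)).deriv
  rw [← h1, h3]
  exact h2

end aux

/-- The Bott cocycle satisfies the 2-cocycle identity
`B(f∘g, h) + B(f, g) = B(f, g∘h) + B(g, h)`. -/
theorem bottCocycle_cocycle_identity (f g h : ℝ → ℝ)
    (hf : ContDiff ℝ (⊤ : ℕ∞) f) (hg : ContDiff ℝ (⊤ : ℕ∞) g) (hh : ContDiff ℝ (⊤ : ℕ∞) h)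
    (hf' : ∀ x, 0 < deriv f x) (hg' : ∀ x, 0 < deriv g x) (hh' : ∀ x, 0 < deriv h x)
    (hfper : ∀ x, f (x + 2 * Real.pi) = f x + 2 * Real.pi)
    (hgper : ∀ x, g (x + 2 * Real.pi) = g x + 2 * Real.pi)
    (hhper : ∀ x, h (x + 2 * Real.pi) = h x + 2 * Real.pi) :
    bottCocycle (f ∘ g) h + bottCocycle f g
      = bottCocycle f (g ∘ h) + bottCocycle g h := by
  replace hf : ContDiff ℝ ∞ f := hf.of_le (by simp)
  replace hg : ContDiff ℝ ∞ g := hg.of_le (by simp)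
  replace hh : ContDiff ℝ ∞ h := hh.of_le (by simp)
  have hfg : ContDiff ℝ ∞ (f ∘ g) := hf.comp hg
  have hgh : ContDiff ℝ ∞ (g ∘ h) := hg.comp hh
  have hfg' : ∀ x, 0 < deriv (f ∘ g) x := fun x => by
    rw [deriv_comp_eq hf hg]; exact mul_pos (hf' _) (hg' _)
  have hgh' : ∀ x, 0 < deriv (g ∘ h) x := fun x => by
    rw [deriv_comp_eq hg hh]; exact mul_pos (hg' _) (hh' _)
  -- abbreviations
  set A : ℝ → ℝ := fun x => Real.log (deriv f (g (h x))) with hA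
  set b : ℝ → ℝ := fun x => Real.log (deriv g (h x)) with hb
  set c : ℝ → ℝ := fun x => Real.log (deriv h x) with hc
  set a : ℝ → ℝ := fun x => Real.log (deriv f (g x)) with ha
  set Bg : ℝ → ℝ := fun x => Real.log (deriv g x) with hBg
  set Dg : ℝ → ℝ := fun x => deriv (deriv g) x / deriv g x with hDg
  set Dh : ℝ → ℝ := fun x => deriv (deriv h) x / deriv h x with hDh
  set b' : ℝ → ℝ := fun x => Dg (h x) * deriv h x with hb'
  -- continuity facts
  have cdg : Continuous (deriv g) := (derivCD hg).continuous
  have cdh : Continuous (deriv h) := (derivCD hh).continuous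
  have cddg : Continuous (deriv (deriv g)) := (derivCD (derivCD hg)).continuous
  have cddh : Continuous (deriv (deriv h)) := (derivCD (derivCD hh)).continuous
  have cg : Continuous g := hg.continuous
  have chh : Continuous h := hh.continuous
  have cLf : Continuous (fun x => Real.log (deriv f x)) := (Lsmooth hf hf').continuous
  have cLg : Continuous Bg := (Lsmooth hg hg').continuous
  have cLh : Continuous c := (Lsmooth hh hh').continuous
  have cA : Continuous A := cLf.comp (cg.comp chh)
  have cb : Continuous b := cLg.comp chh
  have ca : Continuous a := cLf.comp cg
  have cDg : Continuous Dg := cddg.div cdg fun x => (hg' x).ne'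
  have cDh : Continuous Dh := cddh.div cdh fun x => (hh' x).ne'
  have cb' : Continuous b' := (cDg.comp chh).mul cdh
  -- periodicity facts
  have pdf : Function.Periodic (deriv f) (2 * Real.pi) := periodic_deriv_shift hfper
  have pdg : Function.Periodic (deriv g) (2 * Real.pi) := periodic_deriv_shift hgper
  have pdh : Function.Periodic (deriv h) (2 * Real.pi) := periodic_deriv_shift hhper
  have pddg : Function.Periodic (deriv (deriv g)) (2 * Real.pi) := periodic_deriv' pdg
  have hash : ∀ x, HasDerivAt h (deriv h x) x := fun x => (diffOf hh x).hasDerivAt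
  have hh2 : h (2 * Real.pi) = h 0 + 2 * Real.pi := by
    have := hhper 0; rwa [zero_add] at this
  -- rewrite the four cocycle values
  have e1 : bottCocycle (f ∘ g) h = ∫ x in (0:ℝ)..(2 * Real.pi),
      (A x + b x + c x) * Dh x := by
    rw [bott_eq hfg hh hfg' hh']
    refine intervalIntegral.integral_congr fun x _ => ?_
    simp only [hA, hb, hc, hDh]
    rw [deriv_comp_eq hf hg, Real.log_mul (hf' _).ne' (hg' _).ne']
  have e2 : bottCocycle f g = ∫ x in (0:ℝ)..(2 * Real.pi), (a x + Bg x) * Dg x :=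
    bott_eq hf hg hf' hg'
  have e4 : bottCocycle g h = ∫ x in (0:ℝ)..(2 * Real.pi), (b x + c x) * Dh x :=
    bott_eq hg hh hg' hh'
  have e3 : bottCocycle f (g ∘ h) = ∫ x in (0:ℝ)..(2 * Real.pi),
      (A x + b x + c x) * (b' x + Dh x) := by
    rw [bott_eq hf hgh hf' hgh']
    refine intervalIntegral.integral_congr fun x _ => ?_
    simp only [hA, hb, hc, hDh, hb', hDg]
    rw [Dcomp hg hh hg' hh' x, deriv_comp_eq hg hh,
      Real.log_mul (hg' _).ne' (hh' _).ne', Function.comp_apply]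
    ring
  -- Step 1: substitution x = h t and periodicity
  have step1 : (∫ x in (0:ℝ)..(2 * Real.pi), (a x + Bg x) * Dg x)
      = ∫ x in (0:ℝ)..(2 * Real.pi), (A x + b x) * b' x := by
    have cφ : Continuous fun x => (a x + Bg x) * Dg x := (ca.add cLg).mul cDg
    have φper : Function.Periodic (fun x => (a x + Bg x) * Dg x) (2 * Real.pi) := fun x => by
      simp only [ha, hBg, hDg]
      rw [hgper x, pdf (g x), pdg x, pddg x]
    have hsub := intervalIntegral.integral_comp_smul_deriv (a := (0:ℝ)) (b := 2 * Real.pi)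
      (f := h) (f' := deriv h) (g := fun x => (a x + Bg x) * Dg x)
      (fun x _ => hash x) cdh.continuousOn cφ
    have hper := φper.intervalIntegral_add_eq (h 0) 0
    rw [zero_add] at hper
    calc (∫ x in (0:ℝ)..(2 * Real.pi), (a x + Bg x) * Dg x)
        = ∫ x in (h 0)..(h 0 + 2 * Real.pi), (a x + Bg x) * Dg x := hper.symm
      _ = ∫ x in (h 0)..(h (2 * Real.pi)), (a x + Bg x) * Dg x := by rw [hh2]
      _ = ∫ x in (0:ℝ)..(2 * Real.pi),
            deriv h x • ((fun x => (a x + Bg x) * Dg x) ∘ h) x := hsub.symm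
      _ = ∫ x in (0:ℝ)..(2 * Real.pi), (A x + b x) * b' x := by
          refine intervalIntegral.integral_congr fun x _ => ?_
          simp only [Function.comp_apply, smul_eq_mul, hA, hb, hb', ha, hBg]
          ring
  -- Step 2: FTC, the remaining integral vanishes
  have step2 : (∫ x in (0:ℝ)..(2 * Real.pi), (c x * b' x + (b x + c x) * Dh x)) = 0 := by
    have hψ : ∀ x, HasDerivAt (fun y => b y * c y + c y * c y / 2)
        ((b' x * c x + b x * Dh x) + (Dh x * c x + c x * Dh x) / 2) x := fun x => by
      have hbd : HasDerivAt b (b' x) x :=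
        (hasDerivL hg hg' (h x)).comp x (hash x)
      have hcd : HasDerivAt c (Dh x) x := hasDerivL hh hh' x
      exact (hbd.mul hcd).add ((hcd.mul hcd).div_const 2)
    have hcont : Continuous fun x => (b' x * c x + b x * Dh x) + (Dh x * c x + c x * Dh x) / 2 :=
      ((cb'.mul cLh).add (cb.mul cDh)).add (((cDh.mul cLh).add (cLh.mul cDh)).div_const 2)
    have hFTC := intervalIntegral.integral_eq_sub_of_hasDerivAt
      (a := (0:ℝ)) (b := 2 * Real.pi) (f := fun y => b y * c y + c y * c y / 2)
      (fun x _ => hψ x) (hcont.intervalIntegrable _ _)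
    have hbper : b (2 * Real.pi) = b 0 := by
      simp only [hb]; rw [hh2, pdg (h 0)]
    have hcper : c (2 * Real.pi) = c 0 := by
      simp only [hc]; rw [← zero_add (2 * Real.pi), pdh 0]
    rw [show (∫ x in (0:ℝ)..(2 * Real.pi), (c x * b' x + (b x + c x) * Dh x))
        = ∫ x in (0:ℝ)..(2 * Real.pi),
            ((b' x * c x + b x * Dh x) + (Dh x * c x + c x * Dh x) / 2) from
      intervalIntegral.integral_congr fun x _ => by ring]
    exact hFTC.trans (by simp only [hbper, hcper]; ring)
  -- assemble
  rw [e1, e2, e3, e4, step1]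
  have i1 : IntervalIntegrable (fun x => (A x + b x + c x) * Dh x) MeasureTheory.volume 0 (2 * Real.pi) :=
    (((cA.add cb).add cLh).mul cDh).intervalIntegrable _ _
  have i2 : IntervalIntegrable (fun x => (A x + b x) * b' x) MeasureTheory.volume 0 (2 * Real.pi) :=
    ((cA.add cb).mul cb').intervalIntegrable _ _
  have i3 : IntervalIntegrable (fun x => (A x + b x + c x) * (b' x + Dh x)) MeasureTheory.volume 0 (2 * Real.pi) :=
    (((cA.add cb).add cLh).mul (cb'.add cDh)).intervalIntegrable _ _
  have i4 : IntervalIntegrable (fun x => (b x + c x) * Dh x) MeasureTheory.volume 0 (2 * Real.pi) :=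
    ((cb.add cLh).mul cDh).intervalIntegrable _ _
  have i5 : IntervalIntegrable (fun x => (c x * b' x + (b x + c x) * Dh x)) MeasureTheory.volume 0 (2 * Real.pi) :=
    ((cLh.mul cb').add ((cb.add cLh).mul cDh)).intervalIntegrable _ _
  rw [← intervalIntegral.integral_add i1 i2, ← intervalIntegral.integral_add i3 i4]
  calc (∫ x in (0:ℝ)..(2 * Real.pi), ((A x + b x + c x) * Dh x + (A x + b x) * b' x))
      = ∫ x in (0:ℝ)..(2 * Real.pi),
          ((A x + b x + c x) * (b' x + Dh x) + (b x + c x) * Dh x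
            - (c x * b' x + (b x + c x) * Dh x)) :=
        intervalIntegral.integral_congr fun x _ => by ring
    _ = (∫ x in (0:ℝ)..(2 * Real.pi), ((A x + b x + c x) * (b' x + Dh x) + (b x + c x) * Dh x))
          - ∫ x in (0:ℝ)..(2 * Real.pi), (c x * b' x + (b x + c x) * Dh x) :=
        intervalIntegral.integral_sub (i3.add i4) i5
    _ = ∫ x in (0:ℝ)..(2 * Real.pi), ((A x + b x + c x) * (b' x + Dh x) + (b x + c x) * Dh x) := by
        rw [step2, sub_zero]
end

section
/- If U : (0,∞) → ℝ satisfies x·U(1/x) = U(x), then for any smooth orientation-preserving diffeomorphism f of ℝ with f(x+2π)=f(x)+2π and f'>0, ∫₀^{2π} U(f'(x)) dx = ∫₀^{2π} U((f⁻¹)'(x)) dx; i.e., the function H(f) = ∫₀^{2π} U(f') dx is inverse-invariant. -/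
open intervalIntegral

/-- If `U` satisfies `x·U(1/x) = U(x)` on `(0,∞)`, then
`H(f) = ∫₀^{2π} U(f'(x)) dx` is inverse-invariant on `Diff₊(S¹)`:
`∫₀^{2π} U(f') = ∫₀^{2π} U((f⁻¹)')`. -/
theorem H_inverse_invariant (U : ℝ → ℝ) (f g : ℝ → ℝ)
    (hfe : ∀ x > (0:ℝ), x * U (1 / x) = U x)
    (hf : ContDiff ℝ (⊤ : ℕ∞) f) (hg : ContDiff ℝ (⊤ : ℕ∞) g)
    (hf' : ∀ x, 0 < deriv f x)
    (hper : ∀ x, f (x + 2 * Real.pi) = f x + 2 * Real.pi)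
    (hinv₁ : ∀ x, g (f x) = x) (hinv₂ : ∀ x, f (g x) = x) :
    ∫ x in (0:ℝ)..(2 * Real.pi), U (deriv f x)
      = ∫ x in (0:ℝ)..(2 * Real.pi), U (deriv g x) := by
  have hfd : Differentiable ℝ f := hf.differentiable (by simp)
  have hmono : StrictMono f := strictMono_of_deriv_pos hf'
  have hsurj : Function.Surjective f := fun y => ⟨g y, hinv₂ y⟩
  have hfinj : Function.Injective f := fun a b h => by
    rw [← hinv₁ a, ← hinv₁ b, h]
  set e : ℝ ≃o ℝ := StrictMono.orderIsoOfSurjective f hmono hsurj with he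
  have hge : ∀ y, g y = e.symm y := by
    intro y
    apply hfinj
    rw [hinv₂]
    have : f (e.symm y) = e (e.symm y) := rfl
    rw [this, OrderIso.apply_symm_apply]
  have hgc : Continuous g := by
    have : g = fun y => e.symm y := funext hge
    rw [this]; exact e.symm.continuous
  -- derivative of g
  have hgd : ∀ y, HasDerivAt g (deriv f (g y))⁻¹ y := by
    intro y
    have h1 : HasDerivAt f (deriv f (g y)) (g y) := (hfd (g y)).hasDerivAt
    exact HasDerivAt.of_local_left_inverse (hgc.continuousAt) h1 (ne_of_gt (hf' _))
      (Filter.Eventually.of_forall hinv₂)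
  have hgderiv : ∀ y, deriv g y = (deriv f (g y))⁻¹ := fun y => (hgd y).deriv
  -- periodicity of deriv f
  have hfper' : ∀ x, deriv f (x + 2 * Real.pi) = deriv f x := by
    intro x
    have h1 : deriv (fun y => f (y + 2 * Real.pi)) x = deriv f (x + 2 * Real.pi) := by
      rw [deriv_comp_add_const]
    have h2 : (fun y => f (y + 2 * Real.pi)) = fun y => f y + 2 * Real.pi :=
      funext fun y => hper y
    rw [← h1, h2, deriv_add_const]
  -- g shifts by 2π
  have hgper : ∀ x, g (x + 2 * Real.pi) = g x + 2 * Real.pi := by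
    intro x
    apply hfinj
    rw [hinv₂, hper, hinv₂]
  -- U ∘ deriv g is periodic
  have hFper : Function.Periodic (fun x => U (deriv g x)) (2 * Real.pi) := by
    intro x
    simp only [hgderiv, hgper, hfper']
  -- shift the RHS integral
  have hshift : (∫ x in (0:ℝ)..(2 * Real.pi), U (deriv g x))
      = ∫ x in (f 0)..(f 0 + 2 * Real.pi), U (deriv g x) := by
    have := hFper.intervalIntegral_add_eq (f 0) 0
    simpa using this.symm
  have hf2π : f (2 * Real.pi) = f 0 + 2 * Real.pi := by
    have := hper 0
    simpa using this
  -- image of the interval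
  have himg : f '' Set.Ioc 0 (2 * Real.pi) = Set.Ioc (f 0) (f (2 * Real.pi)) := by
    have : f '' Set.Ioc 0 (2 * Real.pi) = e '' Set.Ioc 0 (2 * Real.pi) := rfl
    rw [this, e.image_Ioc]
    rfl
  -- change of variables
  have hcov : (∫ x in Set.Ioc (f 0) (f (2 * Real.pi)), U (deriv g x))
      = ∫ x in Set.Ioc 0 (2 * Real.pi), |deriv f x| • U (deriv g (f x)) := by
    rw [← himg]
    exact MeasureTheory.integral_image_eq_integral_abs_deriv_smul measurableSet_Ioc
      (fun x _ => ((hfd x).hasDerivAt).hasDerivWithinAt) (hfinj.injOn) _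
  have hpi : (0:ℝ) < 2 * Real.pi := by positivity
  have hle : f 0 ≤ f (2 * Real.pi) := (hmono.le_iff_le).mpr (le_of_lt hpi)
  -- pointwise identity of the transformed integrand
  have hpt : ∀ x, |deriv f x| • U (deriv g (f x)) = U (deriv f x) := by
    intro x
    rw [hgderiv, hinv₁, abs_of_pos (hf' x), smul_eq_mul, ← one_div]
    exact hfe _ (hf' x)
  calc ∫ x in (0:ℝ)..(2 * Real.pi), U (deriv f x)
      = ∫ x in Set.Ioc 0 (2 * Real.pi), U (deriv f x) := by
        rw [intervalIntegral.integral_of_le (le_of_lt hpi)]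
    _ = ∫ x in Set.Ioc 0 (2 * Real.pi), |deriv f x| • U (deriv g (f x)) := by
        congr 1
        exact funext fun x => (hpt x).symm
    _ = ∫ x in Set.Ioc (f 0) (f (2 * Real.pi)), U (deriv g x) := hcov.symm
    _ = ∫ x in (f 0)..(f (2 * Real.pi)), U (deriv g x) := by
        rw [intervalIntegral.integral_of_le hle]
    _ = ∫ x in (f 0)..(f 0 + 2 * Real.pi), U (deriv g x) := by rw [hf2π]
    _ = ∫ x in (0:ℝ)..(2 * Real.pi), U (deriv g x) := hshift.symm
end

section
/- Consequently, for U(x)=√x, the function H on the Virasoro group defined by H((f,F)) = F² + ∫₀^{2π} √(f'(x)) dx is inverse-invariant: H((f,F)⁻¹) = H((f,F)), where (f,F)⁻¹ = (f⁻¹, −F). -/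
open intervalIntegral

/-- For `U(x) = √x`, the function `H((f,F)) = F² + ∫₀^{2π} √(f') dx` on the
Virasoro group is inverse-invariant: `H((f⁻¹,−F)) = H((f,F))`. -/
theorem H_sqrt_inverse_invariant (f g : ℝ → ℝ) (F : ℝ)
    (hf : ContDiff ℝ (⊤ : ℕ∞) f) (hg : ContDiff ℝ (⊤ : ℕ∞) g)
    (hf' : ∀ x, 0 < deriv f x)
    (hper : ∀ x, f (x + 2 * Real.pi) = f x + 2 * Real.pi)
    (hinv₁ : ∀ x, g (f x) = x) (hinv₂ : ∀ x, f (g x) = x) :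
    (-F) ^ 2 + (∫ x in (0:ℝ)..(2 * Real.pi), Real.sqrt (deriv g x))
      = F ^ 2 + ∫ x in (0:ℝ)..(2 * Real.pi), Real.sqrt (deriv f x) := by
  have hfd : Differentiable ℝ f := hf.differentiable (by simp)
  -- f is strictly monotone and surjective
  have hmono : StrictMono f := strictMono_of_deriv_pos hf'
  have hsurj : Function.Surjective f := fun x => ⟨g x, hinv₂ x⟩
  -- g is continuous
  have hgc : Continuous g := by
    let e := StrictMono.orderIsoOfSurjective f hmono hsurj
    have hge : g = fun x => e.symm x := by
      funext x
      have h1 : e (g x) = x := hinv₂ x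
      have h2 := congrArg e.symm h1
      rwa [e.symm_apply_apply] at h2
    rw [hge]
    exact (OrderIso.continuous e.symm)
  -- derivative of g
  have hgderiv : ∀ x, HasDerivAt g (deriv f (g x))⁻¹ x := by
    intro x
    have hfx : HasDerivAt f (deriv f (g x)) (g x) := (hfd (g x)).hasDerivAt
    exact HasDerivAt.of_local_left_inverse (hgc.continuousAt)
      hfx (ne_of_gt (hf' (g x)))
      (Filter.Eventually.of_forall hinv₂)
  have hgderiv' : ∀ x, deriv g x = (deriv f (g x))⁻¹ := fun x => (hgderiv x).deriv
  -- continuity of deriv f and deriv g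
  have hdfc : Continuous (deriv f) := hf.continuous_deriv (by simp)
  have hφc : Continuous (fun x => Real.sqrt (deriv g x)) := by
    have : Continuous (fun x => (deriv f (g x))⁻¹) :=
      (hdfc.comp hgc).inv₀ (fun x => ne_of_gt (hf' (g x)))
    have h2 : Continuous fun x => Real.sqrt ((deriv f (g x))⁻¹) := this.sqrt
    rw [show (fun x => Real.sqrt (deriv g x))
        = fun x => Real.sqrt ((deriv f (g x))⁻¹) from funext fun x => by rw [hgderiv']]
    exact h2
  -- periodicity of deriv f
  have hdper : ∀ x, deriv f (x + 2 * Real.pi) = deriv f x := by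
    intro x
    have h1 : (fun y => f (y + 2 * Real.pi)) = fun y => f y + 2 * Real.pi := funext hper
    calc deriv f (x + 2 * Real.pi) = deriv (fun y => f (y + 2 * Real.pi)) x := by
          rw [deriv_comp_add_const]
      _ = deriv (fun y => f y + 2 * Real.pi) x := by rw [h1]
      _ = deriv f x := by rw [deriv_add_const]
  -- values of f at endpoints
  have hfg0 : f (g 0) = 0 := hinv₂ 0
  have hfg2 : f (g 0 + 2 * Real.pi) = 2 * Real.pi := by rw [hper, hfg0, zero_add]
  -- change of variables
  have hcov : (∫ x in (0:ℝ)..(2 * Real.pi), Real.sqrt (deriv g x))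
      = ∫ u in (g 0)..(g 0 + 2 * Real.pi),
          deriv f u • ((fun x => Real.sqrt (deriv g x)) ∘ f) u := by
    rw [intervalIntegral.integral_comp_smul_deriv
      (fun u _ => (hfd u).hasDerivAt) hdfc.continuousOn hφc, hfg0, hfg2]
  -- simplify the integrand
  have hint : ∀ u, deriv f u • ((fun x => Real.sqrt (deriv g x)) ∘ f) u
      = Real.sqrt (deriv f u) := by
    intro u
    have h1 : deriv g (f u) = (deriv f u)⁻¹ := by rw [hgderiv', hinv₁]
    simp only [Function.comp_apply, smul_eq_mul, h1, Real.sqrt_inv]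
    rw [← div_eq_mul_inv]
    exact Real.div_sqrt
  -- combine with periodicity
  have hψper : Function.Periodic (fun u => Real.sqrt (deriv f u)) (2 * Real.pi) :=
    fun x => by simp [hdper x]
  have key : (∫ x in (0:ℝ)..(2 * Real.pi), Real.sqrt (deriv g x))
      = ∫ x in (0:ℝ)..(2 * Real.pi), Real.sqrt (deriv f x) := by
    rw [hcov]
    simp only [hint]
    have := hψper.intervalIntegral_add_eq (g 0) 0
    simpa using this
  rw [key, neg_pow]
  ring
end

section
/- Formal continuous limit of the discrete angular-velocity recursion: if ω(x,ε) = x + ε v(x,t) and σ(x,ε) = x + ε v(x,t+ε) with v smooth, then substituting into the Euler–Lagrange expression −2Ω(log ω')'' + U''(ω')ω'ω'' + 2Ω(log (σ⁻¹)')'' + U''(1/(σ⁻¹)')·(σ⁻¹)''/((σ⁻¹)')², with Ω replaced by εA, the coefficient of ε² in the Taylor expansion at ε=0 equals −4A v_xxx + 2U''(1) v_x v_xx + U''(1) v v_xxx − U''(1) v_txx, and the coefficients of ε⁰ and ε¹ vanish. -/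
open Real Function

noncomputable def px (f : ℝ×ℝ → ℝ) : ℝ×ℝ → ℝ := fun p => fderiv ℝ f p (1,0)
noncomputable def py (f : ℝ×ℝ → ℝ) : ℝ×ℝ → ℝ := fun p => fderiv ℝ f p (0,1)

lemma contDiff_px {f : ℝ×ℝ → ℝ} (hf : ContDiff ℝ (⊤:ℕ∞) f) : ContDiff ℝ (⊤:ℕ∞) (px f) :=
  (hf.fderiv_right (by simp)).clm_apply contDiff_const

lemma contDiff_py {f : ℝ×ℝ → ℝ} (hf : ContDiff ℝ (⊤:ℕ∞) f) : ContDiff ℝ (⊤:ℕ∞) (py f) :=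
  (hf.fderiv_right (by simp)).clm_apply contDiff_const

lemma clm_pair (L : ℝ×ℝ →L[ℝ] ℝ) (a b : ℝ) : L (a,b) = a * L (1,0) + b * L (0,1) := by
  have h : (a,b) = a • ((1:ℝ),(0:ℝ)) + b • ((0:ℝ),(1:ℝ)) := by simp
  rw [h, map_add, map_smul, map_smul, smul_eq_mul, smul_eq_mul]

lemma hasDerivAt_px {f : ℝ×ℝ → ℝ} (hf : ContDiff ℝ (⊤:ℕ∞) f) (x s : ℝ) :
    HasDerivAt (fun y => f (y, s)) (px f (x, s)) x := by
  have hc : HasDerivAt (fun y : ℝ => (y, s)) ((1:ℝ), (0:ℝ)) x :=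
    (hasDerivAt_id x).prodMk (hasDerivAt_const x s)
  exact ((hf.differentiable (by simp) (x, s)).hasFDerivAt.comp_hasDerivAt x hc)

lemma hasDerivAt_py {f : ℝ×ℝ → ℝ} (hf : ContDiff ℝ (⊤:ℕ∞) f) (x s : ℝ) :
    HasDerivAt (fun r => f (x, r)) (py f (x, s)) s := by
  have hc : HasDerivAt (fun r : ℝ => (x, r)) ((0:ℝ), (1:ℝ)) s :=
    (hasDerivAt_const s x).prodMk (hasDerivAt_id s)
  exact ((hf.differentiable (by simp) (x, s)).hasFDerivAt.comp_hasDerivAt s hc)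

lemma hasDerivAt_curve {f : ℝ×ℝ → ℝ} (hf : ContDiff ℝ (⊤:ℕ∞) f) {g k : ℝ → ℝ}
    {e a b : ℝ} (hg : HasDerivAt g a e) (hk : HasDerivAt k b e) :
    HasDerivAt (fun r => f (g r, k r)) (a * px f (g e, k e) + b * py f (g e, k e)) e := by
  have hc : HasDerivAt (fun r : ℝ => (g r, k r)) ((a, b)) e := hg.prodMk hk
  have := (hf.differentiable (by simp) (g e, k e)).hasFDerivAt.comp_hasDerivAt e hc
  rwa [clm_pair] at this

lemma px_py_comm {f : ℝ×ℝ → ℝ} (hf : ContDiff ℝ (⊤:ℕ∞) f) (p : ℝ×ℝ) :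
    px (py f) p = py (px f) p := by
  have hd : ∀ q, HasFDerivAt f (fderiv ℝ f q) q := fun q =>
    (hf.differentiable (by simp) q).hasFDerivAt
  have hf' : ContDiff ℝ (⊤:ℕ∞) (fderiv ℝ f) := hf.fderiv_right (by simp)
  have h2 : HasFDerivAt (fderiv ℝ f) (fderiv ℝ (fderiv ℝ f) p) p :=
    (hf'.differentiable (by simp) p).hasFDerivAt
  have hsymm := second_derivative_symmetric hd h2 (1,0) (0,1)
  have e1 : px (py f) p = (fderiv ℝ (fderiv ℝ f) p (1,0)) (0,1) := by
    unfold px py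
    rw [fderiv_clm_apply (hf'.differentiable (by simp) p)
      (differentiableAt_const _)]
    simp
  have e2 : py (px f) p = (fderiv ℝ (fderiv ℝ f) p (0,1)) (1,0) := by
    unfold px py
    rw [fderiv_clm_apply (hf'.differentiable (by simp) p)
      (differentiableAt_const _)]
    simp
  rw [e1, e2, hsymm]

lemma hasDerivAt_id_mul {f : ℝ → ℝ} {f' e : ℝ} (hf : HasDerivAt f f' e) :
    HasDerivAt (fun y => y * f y) (f e + e * f') e := by
  exact ((hasDerivAt_id' e).mul hf).congr_deriv (by simp)

/-- Formal continuous limit of the discrete Euler–Lagrange expression on the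
Virasoro group: with `ω(w,ε) = w + ε v(w,t)`, `σ(w,ε) = w + ε v(w,t+ε)`, `Ω = εA`,
and `τ(·,ε)` the inverse diffeomorphism of `σ(·,ε)` for small `ε`, the map
`F : ε ↦ −2εA (log ω')'' + U''(ω')ω'ω'' + 2εA (log τ')'' + U''(1/τ')·τ''/(τ')²`
(all primes denoting `x`-derivatives, evaluated at `x`) satisfies `F(0) = 0`,
`F'(0) = 0` (i.e. the `ε⁰` and `ε¹` Taylor coefficients vanish) and its `ε²`
Taylor coefficient `F''(0)/2` equals
`−4A v_xxx + 2U''(1) v_x v_xx + U''(1) v v_xxx − U''(1) v_txx`. -/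
theorem formal_continuous_limit (U : ℝ → ℝ) (v : ℝ → ℝ → ℝ) (τ : ℝ → ℝ → ℝ)
    (A t δ : ℝ) (hδ : 0 < δ)
    (hU : ContDiff ℝ (⊤ : ℕ∞) U)
    (hv : ContDiff ℝ (⊤ : ℕ∞) (Function.uncurry v))
    (hvper : ∀ x s, v (x + 2 * Real.pi) s = v x s)
    (hτ : ContDiff ℝ (⊤ : ℕ∞) (Function.uncurry τ))
    (hinv : ∀ ε : ℝ, |ε| < δ →
      (∀ w, τ (w + ε * v w (t + ε)) ε = w) ∧
      (∀ w, τ w ε + ε * v (τ w ε) (t + ε) = w)) :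
    ∀ x : ℝ,
      let F : ℝ → ℝ := fun ε =>
        -2 * ε * A *
            deriv (fun y => deriv (fun z =>
              Real.log (deriv (fun w => w + ε * v w t) z)) y) x
        + deriv (deriv U) (deriv (fun w => w + ε * v w t) x)
            * deriv (fun w => w + ε * v w t) x
            * deriv (fun y => deriv (fun w => w + ε * v w t) y) x
        + 2 * ε * A *
            deriv (fun y => deriv (fun z =>
              Real.log (deriv (fun w => τ w ε) z)) y) x
        + deriv (deriv U) (1 / deriv (fun w => τ w ε) x)
            * (deriv (fun y => deriv (fun w => τ w ε) y) x
                / (deriv (fun w => τ w ε) x) ^ 2)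
      F 0 = 0 ∧ deriv F 0 = 0 ∧
        deriv (deriv F) 0 / 2
          = -4 * A * deriv (fun y => deriv (fun z => deriv (fun w => v w t) z) y) x
            + 2 * deriv (deriv U) 1 * deriv (fun y => v y t) x
                * deriv (fun y => deriv (fun z => v z t) y) x
            + deriv (deriv U) 1 * v x t
                * deriv (fun y => deriv (fun z => deriv (fun w => v w t) z) y) x
            - deriv (deriv U) 1
                * deriv (fun y => deriv (fun z => deriv (fun s => v z s) t) y) x := by
  intro x
  have hv' : ContDiff ℝ (⊤:ℕ∞) (uncurry v) := hv.of_le (by simp)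
  have hτ' : ContDiff ℝ (⊤:ℕ∞) (uncurry τ) := hτ.of_le (by simp)
  have hU' : ContDiff ℝ (⊤:ℕ∞) U := hU.of_le (by simp)
  set U2 : ℝ → ℝ := deriv (deriv U) with hU2def
  have hU1 : ContDiff ℝ (⊤:ℕ∞) (deriv U) := (contDiff_infty_iff_deriv.mp hU').2
  have hU2 : ContDiff ℝ (⊤:ℕ∞) U2 := (contDiff_infty_iff_deriv.mp hU1).2
  set w1 : ℝ×ℝ → ℝ := px (uncurry v) with hw1def
  have hw1 : ContDiff ℝ (⊤:ℕ∞) w1 := contDiff_px hv'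
  set w2 : ℝ×ℝ → ℝ := px w1 with hw2def
  have hw2 : ContDiff ℝ (⊤:ℕ∞) w2 := contDiff_px hw1
  set w3 : ℝ×ℝ → ℝ := px w2 with hw3def
  have hw3 : ContDiff ℝ (⊤:ℕ∞) w3 := contDiff_px hw2
  set T1 : ℝ×ℝ → ℝ := px (uncurry τ) with hT1def
  have hvyt : ∀ y s, HasDerivAt (fun z => v z s) (w1 (y,s)) y := fun y s => hasDerivAt_px hv' y s
  have hw1yt : ∀ y s, HasDerivAt (fun z => w1 (z,s)) (w2 (y,s)) y := fun y s => hasDerivAt_px hw1 y s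
  have hw2yt : ∀ y s, HasDerivAt (fun z => w2 (z,s)) (w3 (y,s)) y := fun y s => hasDerivAt_px hw2 y s
  -- translation of statement's derivative expressions
  have e_w1 : deriv (fun y => v y t) x = w1 (x,t) := (hvyt x t).deriv
  have fe1 : (fun z => deriv (fun w => v w t) z) = fun z => w1 (z,t) :=
    funext fun z => (hvyt z t).deriv
  have e_w2 : deriv (fun y => deriv (fun z => v z t) y) x = w2 (x,t) := by
    have h : (fun y => deriv (fun z => v z t) y) = fun y => w1 (y,t) :=
      funext fun y => (hvyt y t).deriv
    rw [h]; exact (hw1yt x t).deriv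
  have e_w3 : deriv (fun y => deriv (fun z => deriv (fun w => v w t) z) y) x = w3 (x,t) := by
    have h2 : (fun y => deriv (fun z => deriv (fun w => v w t) z) y) = fun y => w2 (y,t) := by
      funext y
      rw [fe1]
      exact (hw1yt y t).deriv
    rw [h2]; exact (hw2yt x t).deriv
  have e_mixed : deriv (fun y => deriv (fun z => deriv (fun s => v z s) t) y) x = py w2 (x,t) := by
    have h1 : (fun z => deriv (fun s => v z s) t) = fun z => py (uncurry v) (z,t) :=
      funext fun z => (hasDerivAt_py hv' z t).deriv
    have h2 : (fun y => deriv (fun z => deriv (fun s => v z s) t) y)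
        = fun y => px (py (uncurry v)) (y,t) := by
      funext y
      rw [h1]
      exact (hasDerivAt_px (contDiff_py hv') y t).deriv
    rw [h2]
    have h3 := (hasDerivAt_px (contDiff_px (contDiff_py hv')) x t).deriv
    rw [h3]
    have c1 : px (py (uncurry v)) = py (px (uncurry v)) := funext fun p => px_py_comm hv' p
    rw [c1]
    exact px_py_comm hw1 (x,t)
  -- tau basic facts
  have hid : ∀ ε, |ε| < δ → ∀ w, τ w ε + ε * v (τ w ε) (t+ε) = w := fun ε hε => (hinv ε hε).2
  have hτ0 : ∀ w, τ w 0 = w := by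
    intro w
    have h := hid 0 (by simpa using hδ) w
    simpa using h
  have hτw : ∀ (ε w : ℝ), HasDerivAt (fun y => τ y ε) (T1 (w,ε)) w := fun ε w =>
    hasDerivAt_px hτ' w ε
  have key : ∀ ε, |ε| < δ → ∀ w, T1 (w,ε) * (1 + ε * w1 (τ w ε, t+ε)) = 1 := by
    intro ε hε w
    have hinner : HasDerivAt (fun y => v (τ y ε) (t+ε)) (w1 (τ w ε, t+ε) * T1 (w,ε)) w :=
      by have := (hvyt (τ w ε) (t+ε)).comp w (hτw ε w); exact this
    have hg : HasDerivAt (fun y => τ y ε + ε * v (τ y ε) (t+ε))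
        (T1 (w,ε) + ε * (w1 (τ w ε, t+ε) * T1 (w,ε))) w := (hτw ε w).add (hinner.const_mul ε)
    have hfe : (fun y => τ y ε + ε * v (τ y ε) (t+ε)) = fun y : ℝ => y := funext (hid ε hε)
    rw [hfe] at hg
    have hu := hg.unique (hasDerivAt_id w)
    linear_combination hu
  have hDne : ∀ ε, |ε| < δ → ∀ w, (1 + ε * w1 (τ w ε, t+ε)) ≠ 0 := fun ε hε w =>
    right_ne_zero_of_mul_eq_one (key ε hε w)
  have hT1ne : ∀ ε, |ε| < δ → ∀ w, T1 (w,ε) ≠ 0 := fun ε hε w =>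
    left_ne_zero_of_mul_eq_one (key ε hε w)
  have hT1eq : ∀ ε, |ε| < δ → ∀ w, T1 (w,ε) = (1 + ε * w1 (τ w ε, t+ε))⁻¹ := fun ε hε w =>
    eq_inv_of_mul_eq_one_left (key ε hε w)
  have hDy : ∀ (ε y : ℝ), HasDerivAt (fun z => 1 + ε * w1 (τ z ε, t+ε))
      (ε * (w2 (τ y ε, t+ε) * T1 (y,ε))) y := by
    intro ε y
    have h : HasDerivAt (fun z => w1 (τ z ε, t+ε)) (w2 (τ y ε, t+ε) * T1 (y,ε)) y :=
      by have := (hw1yt (τ y ε) (t+ε)).comp y (hτw ε y); exact this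
    simpa using (h.const_mul ε).const_add 1
  have hT1y : ∀ ε, |ε| < δ → ∀ y, HasDerivAt (fun z => T1 (z,ε))
      (-(ε * (w2 (τ y ε, t+ε) * T1 (y,ε))) / (1 + ε * w1 (τ y ε, t+ε))^2) y := by
    intro ε hε y
    have h1 := (hDy ε y).inv (hDne ε hε y)
    have hfe : (fun z => T1 (z,ε)) = fun z => (1 + ε * w1 (τ z ε, t+ε))⁻¹ :=
      funext fun z => hT1eq ε hε z
    rw [hfe]
    exact h1
  -- tau-side values of F subterms
  have eτ1 : ∀ ε : ℝ, deriv (fun w => τ w ε) x = T1 (x,ε) := fun ε => (hτw ε x).deriv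
  have eτ2 : ∀ ε, |ε| < δ → deriv (fun y => deriv (fun w => τ w ε) y) x
      = -(ε * (w2 (τ x ε, t+ε) * T1 (x,ε))) / (1 + ε * w1 (τ x ε, t+ε))^2 := by
    intro ε hε
    have hfe : (fun y => deriv (fun w => τ w ε) y) = fun y => T1 (y,ε) :=
      funext fun y => (hτw ε y).deriv
    rw [hfe]; exact (hT1y ε hε x).deriv
  have eτ3 : ∀ ε, |ε| < δ →
      deriv (fun y => deriv (fun z => Real.log (deriv (fun w => τ w ε) z)) y) x
      = (-(ε * w3 (τ x ε, t+ε)) * (1 + ε * w1 (τ x ε, t+ε))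
          + 2*(ε * w2 (τ x ε, t+ε))^2) / (1 + ε * w1 (τ x ε, t+ε))^4 := by
    intro ε hε
    have hfe1 : (fun z => Real.log (deriv (fun w => τ w ε) z)) = fun z => Real.log (T1 (z,ε)) := by
      funext z; rw [(hτw ε z).deriv]
    rw [hfe1]
    have hfe2 : (fun y => deriv (fun z => Real.log (T1 (z,ε))) y)
        = fun y => -(ε * w2 (τ y ε, t+ε)) / (1 + ε * w1 (τ y ε, t+ε))^2 := by
      funext y
      have h := (hT1y ε hε y).log (hT1ne ε hε y)
      rw [h.deriv, hT1eq ε hε y]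
      have hD := hDne ε hε y
      field_simp
    rw [hfe2]
    have hnum : HasDerivAt (fun y => -(ε * w2 (τ y ε, t+ε)))
        (-(ε * (w3 (τ x ε, t+ε) * T1 (x,ε)))) x := by
      have h : HasDerivAt (fun y => w2 (τ y ε, t+ε)) (w3 (τ x ε, t+ε) * T1 (x,ε)) x :=
        by have := (hw2yt (τ x ε) (t+ε)).comp x (hτw ε x); exact this
      exact (h.const_mul ε).neg
    have hden : HasDerivAt (fun y => (1 + ε * w1 (τ y ε, t+ε))^2)
        ((2:ℕ) * (1 + ε * w1 (τ x ε, t+ε))^1 * (ε * (w2 (τ x ε, t+ε) * T1 (x,ε)))) x :=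
      (hDy ε x).pow 2
    have hdiv : deriv (fun y => -(ε * w2 (τ y ε, t+ε)) / (1 + ε * w1 (τ y ε, t+ε))^2) x = _ :=
      (hnum.div hden (pow_ne_zero 2 (hDne ε hε x))).deriv
    rw [hdiv, hT1eq ε hε x]
    have hD := hDne ε hε x
    field_simp
    ring
  have eτ4 : ∀ ε, |ε| < δ →
      U2 (1 / deriv (fun w => τ w ε) x)
        * (deriv (fun y => deriv (fun w => τ w ε) y) x / (deriv (fun w => τ w ε) x) ^ 2)
      = -(ε * (U2 (1 + ε * w1 (τ x ε, t+ε)) * w2 (τ x ε, t+ε)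
            * (1 + ε * w1 (τ x ε, t+ε))⁻¹)) := by
    intro ε hε
    rw [eτ1 ε, eτ2 ε hε, hT1eq ε hε x]
    have hD := hDne ε hε x
    rw [one_div, inv_inv]
    field_simp
  -- omega side
  have hEz : ∀ (ε z : ℝ), HasDerivAt (fun w => w + ε * v w t) (1 + ε * w1 (z,t)) z := by
    intro ε z
    exact (hasDerivAt_id z).add ((hvyt z t).const_mul ε)
  have eω1 : ∀ ε : ℝ, deriv (fun w => w + ε * v w t) x = 1 + ε * w1 (x,t) := fun ε =>
    (hEz ε x).deriv
  have hE2 : ∀ (ε y : ℝ), HasDerivAt (fun z => 1 + ε * w1 (z,t)) (ε * w2 (y,t)) y := by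
    intro ε y
    simpa using ((hw1yt y t).const_mul ε).const_add 1
  have eω2 : ∀ ε : ℝ, deriv (fun y => deriv (fun w => w + ε * v w t) y) x = ε * w2 (x,t) := by
    intro ε
    have hfe : (fun y => deriv (fun w => w + ε * v w t) y) = fun y => 1 + ε * w1 (y,t) :=
      funext fun y => (hEz ε y).deriv
    rw [hfe]; exact (hE2 ε x).deriv
  -- bound on w1 near x
  obtain ⟨C, hC⟩ : ∃ C, ∀ z ∈ Set.Icc (x-1) (x+1), |w1 (z,t)| ≤ C := by
    obtain ⟨C, hC⟩ := isCompact_Icc.exists_bound_of_continuousOn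
      ((hw1.continuous.comp (continuous_id.prodMk continuous_const)).continuousOn
        (s := Set.Icc (x-1) (x+1)))
    exact ⟨C, fun z hz => by simpa [Real.norm_eq_abs] using hC z hz⟩
  have hxI : x ∈ Set.Icc (x-1) (x+1) := by constructor <;> linarith
  have hC0 : 0 ≤ C := le_trans (abs_nonneg _) (hC x hxI)
  set δ' : ℝ := min δ (1/(2*(C+1))) with hδ'def
  have hδ'pos : 0 < δ' := lt_min hδ (by positivity)
  have hδ'δ : δ' ≤ δ := min_le_left _ _
  have hEpos : ∀ ε, |ε| < δ' → ∀ z ∈ Set.Icc (x-1) (x+1), 0 < 1 + ε * w1 (z,t) := by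
    intro ε hε z hz
    have h1 : |ε * w1 (z,t)| ≤ |ε| * C := by
      rw [abs_mul]; exact mul_le_mul_of_nonneg_left (hC z hz) (abs_nonneg ε)
    have hεlt : |ε| < 1/(2*(C+1)) := lt_of_lt_of_le hε (min_le_right _ _)
    have h2 : |ε| * C < 1/2 := by
      have h3 : |ε| * (C+1) < (1/(2*(C+1))) * (C+1) :=
        mul_lt_mul_of_pos_right hεlt (by positivity)
      have h4 : (1/(2*(C+1))) * (C+1) = 1/2 := by field_simp
      nlinarith [abs_nonneg ε]
    nlinarith [neg_abs_le (ε * w1 (z,t))]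
  have eω3 : ∀ ε, |ε| < δ' →
      deriv (fun y => deriv (fun z => Real.log (deriv (fun w => w + ε * v w t) z)) y) x
      = (ε * w3 (x,t) * (1 + ε * w1 (x,t)) - (ε * w2 (x,t)) * (ε * w2 (x,t)))
        / (1 + ε * w1 (x,t))^2 := by
    intro ε hε
    have hfe1 : (fun z => Real.log (deriv (fun w => w + ε * v w t) z))
        = fun z => Real.log (1 + ε * w1 (z,t)) := by
      funext z; rw [(hEz ε z).deriv]
    rw [hfe1]
    have hloc : (fun y => deriv (fun z => Real.log (1 + ε * w1 (z,t))) y) =ᶠ[nhds x]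
        (fun y => (ε * w2 (y,t)) / (1 + ε * w1 (y,t))) := by
      filter_upwards [Metric.ball_mem_nhds x one_pos] with y hy
      have hyI : y ∈ Set.Icc (x-1) (x+1) := by
        have := Metric.mem_ball.mp hy
        rw [Real.dist_eq] at this
        constructor <;> [linarith [neg_abs_le (y - x)]; linarith [le_abs_self (y - x)]]
      exact ((hE2 ε y).log (ne_of_gt (hEpos ε hε y hyI))).deriv
    rw [hloc.deriv_eq]
    have hnum : HasDerivAt (fun y => ε * w2 (y,t)) (ε * w3 (x,t)) x := (hw2yt x t).const_mul ε
    have hden : HasDerivAt (fun y => 1 + ε * w1 (y,t)) (ε * w2 (x,t)) x := hE2 ε x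
    exact (hnum.div hden (ne_of_gt (hEpos ε hε x hxI))).deriv
  intro F
  have hFval : ∀ ε : ℝ, F ε =
      -2 * ε * A *
          deriv (fun y => deriv (fun z =>
            Real.log (deriv (fun w => w + ε * v w t) z)) y) x
      + U2 (deriv (fun w => w + ε * v w t) x)
          * deriv (fun w => w + ε * v w t) x
          * deriv (fun y => deriv (fun w => w + ε * v w t) y) x
      + 2 * ε * A *
          deriv (fun y => deriv (fun z =>
            Real.log (deriv (fun w => τ w ε) z)) y) x
      + U2 (1 / deriv (fun w => τ w ε) x)
          * (deriv (fun y => deriv (fun w => τ w ε) y) x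
              / (deriv (fun w => τ w ε) x) ^ 2) := fun ε => rfl
  set Φ : ℝ → ℝ := fun ε =>
      -2*A*((ε * w3 (x,t) * (1 + ε * w1 (x,t)) - (ε * w2 (x,t)) * (ε * w2 (x,t)))
            / (1 + ε * w1 (x,t))^2)
      + U2 (1 + ε * w1 (x,t)) * (1 + ε * w1 (x,t)) * w2 (x,t)
      + 2*A*((-(ε * w3 (τ x ε, t+ε)) * (1 + ε * w1 (τ x ε, t+ε))
              + 2*(ε * w2 (τ x ε, t+ε))^2) / (1 + ε * w1 (τ x ε, t+ε))^4)
      - U2 (1 + ε * w1 (τ x ε, t+ε)) * w2 (τ x ε, t+ε) * (1 + ε * w1 (τ x ε, t+ε))⁻¹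
    with hΦdef
  have hFΦ : ∀ ε, |ε| < δ' → F ε = ε * Φ ε := by
    intro ε hε
    have hεδ : |ε| < δ := lt_of_lt_of_le hε hδ'δ
    rw [hFval ε, eω3 ε hε, eω1 ε, eω2 ε, eτ3 ε hεδ, eτ4 ε hεδ]
    simp only [hΦdef]
    ring
  -- smoothness of Phi near 0
  have hhsm : ContDiff ℝ (⊤:ℕ∞) (fun ε => τ x ε) :=
    hτ'.comp (contDiff_const.prodMk contDiff_id)
  have hγ : ∀ {g : ℝ×ℝ→ℝ}, ContDiff ℝ (⊤:ℕ∞) g →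
      ContDiff ℝ (⊤:ℕ∞) (fun ε => g (τ x ε, t+ε)) :=
    fun {g} hg => hg.comp (hhsm.prodMk (contDiff_const.add contDiff_id))
  have hDxsm : ContDiff ℝ (⊤:ℕ∞) (fun ε => 1 + ε * w1 (τ x ε, t+ε)) :=
    contDiff_const.add (contDiff_id.mul (hγ hw1))
  have hExsm : ContDiff ℝ (⊤:ℕ∞) (fun ε : ℝ => 1 + ε * w1 (x,t)) :=
    contDiff_const.add (contDiff_id.mul contDiff_const)
  set S : Set ℝ := {ε | (1 + ε * w1 (x,t)) ≠ 0 ∧ (1 + ε * w1 (τ x ε, t+ε)) ≠ 0} with hSdef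
  have hSopen : IsOpen S := by
    have h1 : IsOpen {ε : ℝ | (1 + ε * w1 (x,t)) ≠ 0} :=
      isOpen_compl_singleton.preimage hExsm.continuous
    have h2 : IsOpen {ε : ℝ | (1 + ε * w1 (τ x ε, t+ε)) ≠ 0} :=
      isOpen_compl_singleton.preimage hDxsm.continuous
    exact h1.inter h2
  have h0S : (0:ℝ) ∈ S := by
    constructor <;> norm_num
  have hΦS : ContDiffOn ℝ (⊤:ℕ∞) Φ S := by
    rw [hΦdef]
    have c1 : ContDiff ℝ (⊤:ℕ∞) (fun ε : ℝ =>
        ε * w3 (x,t) * (1 + ε * w1 (x,t)) - (ε * w2 (x,t)) * (ε * w2 (x,t))) :=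
      ((contDiff_id.mul contDiff_const).mul hExsm).sub
        ((contDiff_id.mul contDiff_const).mul (contDiff_id.mul contDiff_const))
    have c2 : ContDiff ℝ (⊤:ℕ∞) (fun ε : ℝ =>
        -(ε * w3 (τ x ε, t+ε)) * (1 + ε * w1 (τ x ε, t+ε)) + 2*(ε * w2 (τ x ε, t+ε))^2) :=
      (((contDiff_id.mul (hγ hw3)).neg.mul hDxsm)).add
        (contDiff_const.mul ((contDiff_id.mul (hγ hw2)).pow 2))
    have m1 : ∀ ε ∈ S, ((1:ℝ) + ε * w1 (x,t)) ≠ 0 := fun ε hε => hε.1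
    have m2 : ∀ ε ∈ S, ((1:ℝ) + ε * w1 (τ x ε, t+ε)) ≠ 0 := fun ε hε => hε.2
    have d1 : ContDiffOn ℝ (⊤:ℕ∞) (fun ε : ℝ =>
        (ε * w3 (x,t) * (1 + ε * w1 (x,t)) - (ε * w2 (x,t)) * (ε * w2 (x,t)))
          / (1 + ε * w1 (x,t))^2) S :=
      c1.contDiffOn.div (hExsm.pow 2).contDiffOn (fun ε hε => pow_ne_zero 2 (m1 ε hε))
    have d2 : ContDiffOn ℝ (⊤:ℕ∞) (fun ε : ℝ =>
        (-(ε * w3 (τ x ε, t+ε)) * (1 + ε * w1 (τ x ε, t+ε)) + 2*(ε * w2 (τ x ε, t+ε))^2)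
          / (1 + ε * w1 (τ x ε, t+ε))^4) S :=
      c2.contDiffOn.div ((hDxsm.pow 4).contDiffOn) (fun ε hε => pow_ne_zero 4 (m2 ε hε))
    exact ((((contDiffOn_const.mul d1).add
      (((hU2.comp hExsm).contDiffOn.mul hExsm.contDiffOn).mul contDiffOn_const)).add
      (contDiffOn_const.mul d2)).sub
      (((hU2.comp hDxsm).contDiffOn.mul (hγ hw2).contDiffOn).mul
        (hDxsm.contDiffOn.inv m2)))
  -- derivative of τ x · at 0
  have hτx0 : τ x 0 = x := hτ0 x
  have hhd : HasDerivAt (fun ε => τ x ε) (deriv (fun ε => τ x ε) 0) 0 :=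
    ((hhsm.differentiable (by simp)) 0).hasDerivAt
  set d0 : ℝ := deriv (fun ε => τ x ε) 0 with hd0def
  have htd : HasDerivAt (fun ε : ℝ => t + ε) 1 0 := by
    simpa using (hasDerivAt_id (0:ℝ)).const_add t
  have hvγ : HasDerivAt (fun ε => v (τ x ε) (t+ε))
      (d0 * w1 (x, t) + 1 * py (uncurry v) (x, t)) 0 := by
    have h := hasDerivAt_curve hv' hhd htd
    simpa [hτx0, ← hw1def] using h
  have hlhs : HasDerivAt (fun ε => τ x ε + ε * v (τ x ε) (t+ε)) (d0 + v x t) 0 := by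
    have hmul := (hasDerivAt_id (0:ℝ)).mul hvγ
    have h : HasDerivAt (fun ε => τ x ε + ε * v (τ x ε) (t+ε)) _ 0 := hhd.add hmul
    simpa [hτx0] using h
  have hrhs : HasDerivAt (fun ε => τ x ε + ε * v (τ x ε) (t+ε)) 0 0 := by
    have hev : (fun ε => τ x ε + ε * v (τ x ε) (t+ε)) =ᶠ[nhds 0] (fun _ => x) := by
      filter_upwards [Metric.ball_mem_nhds (0:ℝ) hδ] with ε hε
      exact hid ε (by simpa [Real.dist_eq] using Metric.mem_ball.mp hε) x
    exact (hasDerivAt_const (0:ℝ) x).congr_of_eventuallyEq hev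
  have hd0 : d0 = -(v x t) := by
    have h := hlhs.unique hrhs
    linarith
  -- curve derivatives at 0
  have hw1γ : HasDerivAt (fun ε => w1 (τ x ε, t+ε)) (d0 * w2 (x,t) + py w1 (x,t)) 0 := by
    have h := hasDerivAt_curve hw1 hhd htd
    simpa [hτx0, ← hw2def] using h
  have hw2γ : HasDerivAt (fun ε => w2 (τ x ε, t+ε)) (d0 * w3 (x,t) + py w2 (x,t)) 0 := by
    have h := hasDerivAt_curve hw2 hhd htd
    simpa [hτx0, ← hw3def] using h
  have hw3γ : HasDerivAt (fun ε => w3 (τ x ε, t+ε)) (d0 * px w3 (x,t) + py w3 (x,t)) 0 := by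
    have h := hasDerivAt_curve hw3 hhd htd
    simpa [hτx0] using h
  have hDxd : HasDerivAt (fun ε => 1 + ε * w1 (τ x ε, t+ε)) (w1 (x,t)) 0 := by
    have h := ((hasDerivAt_id (0:ℝ)).mul hw1γ).const_add 1
    simpa [hτx0] using h
  have hExd : HasDerivAt (fun ε : ℝ => 1 + ε * w1 (x,t)) (w1 (x,t)) 0 := by
    simpa using ((hasDerivAt_id (0:ℝ)).mul_const (w1 (x,t))).const_add 1
  have hE0ne : ((1:ℝ) + 0 * w1 (x,t)) ≠ 0 := by norm_num
  have hD0ne : ((1:ℝ) + 0 * w1 (τ x 0, t+0)) ≠ 0 := by norm_num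
  have hU2' : ∀ y : ℝ, HasDerivAt U2 (deriv U2 y) y := fun y =>
    ((hU2.differentiable (by simp)) y).hasDerivAt
  have hU2Ed : HasDerivAt (fun ε : ℝ => U2 (1 + ε * w1 (x,t))) (deriv U2 1 * w1 (x,t)) 0 := by
    have h2 : HasDerivAt U2 (deriv U2 1) ((fun ε : ℝ => 1 + ε * w1 (x,t)) 0) := by
      simpa using hU2' 1
    have h : HasDerivAt (fun ε : ℝ => U2 (1 + ε * w1 (x,t))) (deriv U2 1 * w1 (x,t)) 0 := by have := h2.comp 0 hExd; exact this
    simpa using h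
  have hU2Dd : HasDerivAt (fun ε : ℝ => U2 (1 + ε * w1 (τ x ε, t+ε))) (deriv U2 1 * w1 (x,t)) 0 := by
    have h2 : HasDerivAt U2 (deriv U2 1) ((fun ε : ℝ => 1 + ε * w1 (τ x ε, t+ε)) 0) := by
      simpa [hτx0] using hU2' 1
    have h : HasDerivAt (fun ε : ℝ => U2 (1 + ε * w1 (τ x ε, t+ε))) (deriv U2 1 * w1 (x,t)) 0 := by have := h2.comp 0 hDxd; exact this
    simpa using h
  -- the four pieces of Φ and their derivatives at 0
  have hP1 : HasDerivAt (fun ε : ℝ =>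
      -2*A*((ε * w3 (x,t) * (1 + ε * w1 (x,t)) - (ε * w2 (x,t)) * (ε * w2 (x,t)))
        / (1 + ε * w1 (x,t))^2)) (-2*A*w3 (x,t)) 0 := by
    have hnum := (((hasDerivAt_id (0:ℝ)).mul_const (w3 (x,t))).mul hExd).sub
      (((hasDerivAt_id (0:ℝ)).mul_const (w2 (x,t))).mul ((hasDerivAt_id (0:ℝ)).mul_const (w2 (x,t))))
    have hq := hnum.div (hExd.pow 2) (pow_ne_zero 2 hE0ne)
    have h := hq.const_mul (-2*A)
    refine h.congr_deriv ?_
    norm_num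
  have hP2 : HasDerivAt (fun ε : ℝ =>
      U2 (1 + ε * w1 (x,t)) * (1 + ε * w1 (x,t)) * w2 (x,t))
      ((deriv U2 1 * w1 (x,t) + U2 1 * w1 (x,t)) * w2 (x,t)) 0 := by
    have h := (hU2Ed.mul hExd).mul_const (w2 (x,t))
    refine h.congr_deriv ?_
    norm_num
  have hP3 : HasDerivAt (fun ε : ℝ =>
      2*A*((-(ε * w3 (τ x ε, t+ε)) * (1 + ε * w1 (τ x ε, t+ε))
        + 2*(ε * w2 (τ x ε, t+ε))^2) / (1 + ε * w1 (τ x ε, t+ε))^4))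
      (2*A*(-(w3 (x,t)))) 0 := by
    have hn1 := ((hasDerivAt_id (0:ℝ)).mul hw3γ).neg.mul hDxd
    have hn2 := (((hasDerivAt_id (0:ℝ)).mul hw2γ).pow 2).const_mul (2:ℝ)
    have hq := (hn1.add hn2).div (hDxd.pow 4) (pow_ne_zero 4 hD0ne)
    have h := hq.const_mul (2*A)
    refine h.congr_deriv ?_
    simp [hτx0]
  have hP4 : HasDerivAt (fun ε : ℝ =>
      U2 (1 + ε * w1 (τ x ε, t+ε)) * w2 (τ x ε, t+ε) * (1 + ε * w1 (τ x ε, t+ε))⁻¹)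
      (deriv U2 1 * w1 (x,t) * w2 (x,t) + U2 1 * (d0 * w3 (x,t) + py w2 (x,t))
        - U2 1 * w2 (x,t) * w1 (x,t)) 0 := by
    have h := (hU2Dd.mul hw2γ).mul (hDxd.inv hD0ne)
    refine h.congr_deriv ?_
    simp [hτx0]
    ring
  have hΦd : HasDerivAt Φ
      (-2*A*w3 (x,t) + (deriv U2 1 * w1 (x,t) + U2 1 * w1 (x,t)) * w2 (x,t)
        + 2*A*(-(w3 (x,t)))
        - (deriv U2 1 * w1 (x,t) * w2 (x,t) + U2 1 * (d0 * w3 (x,t) + py w2 (x,t))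
            - U2 1 * w2 (x,t) * w1 (x,t))) 0 := by
    rw [hΦdef]
    exact ((hP1.add hP2).add hP3).sub hP4
  have hΦ0 : Φ 0 = 0 := by
    simp only [hΦdef]
    norm_num [hτx0]
  refine ⟨?_, ?_, ?_⟩
  · rw [hFΦ 0 (by simpa using hδ'pos)]
    ring
  · have hFev : F =ᶠ[nhds 0] fun ε => ε * Φ ε := by
      filter_upwards [Metric.ball_mem_nhds (0:ℝ) hδ'pos] with ε hε
      exact hFΦ ε (by simpa [Real.dist_eq] using Metric.mem_ball.mp hε)
    rw [hFev.deriv_eq, (hasDerivAt_id_mul hΦd).deriv]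
    simp [hΦ0]
  · have hFev : F =ᶠ[nhds 0] fun ε => ε * Φ ε := by
      filter_upwards [Metric.ball_mem_nhds (0:ℝ) hδ'pos] with ε hε
      exact hFΦ ε (by simpa [Real.dist_eq] using Metric.mem_ball.mp hε)
    have hSnhds : S ∈ nhds 0 := hSopen.mem_nhds h0S
    have hΦdiffS : ∀ ε ∈ S, DifferentiableAt ℝ Φ ε := fun ε hε =>
      (hΦS.differentiableOn (by simp)).differentiableAt (hSopen.mem_nhds hε)
    have hdG : deriv (fun ε => ε * Φ ε) =ᶠ[nhds 0] fun ε => Φ ε + ε * deriv Φ ε := by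
      filter_upwards [hSnhds] with ε hε
      rw [(hasDerivAt_id_mul (hΦdiffS ε hε).hasDerivAt).deriv]
    have hdd : deriv (deriv F) 0 = deriv (fun ε => Φ ε + ε * deriv Φ ε) 0 :=
      ((hFev.deriv).trans hdG).deriv_eq
    have hdΦS : ContDiffOn ℝ (⊤:ℕ∞) (deriv Φ) S := hΦS.deriv_of_isOpen hSopen (by simp)
    have hdΦ0 : HasDerivAt (deriv Φ) (deriv (deriv Φ) 0) 0 :=
      ((hdΦS.differentiableOn (by simp)).differentiableAt hSnhds).hasDerivAt
    have hψ : HasDerivAt (fun ε => Φ ε + ε * deriv Φ ε) _ 0 := hΦd.add (hasDerivAt_id_mul hdΦ0)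
    rw [hdd, hψ.deriv, hΦd.deriv, e_w3, e_w1, e_w2, e_mixed, hd0]
    ring
end
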